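/- Let Σ₁, Σ₂ be symmetric positive definite and T the symmetric positive definite solution of T Σ₁ T = Σ₂. Define Σ(t) = ((1−t)I + tT) Σ₁ ((1−t)I + tT) for t ∈ [0,1]. Then for every t, Tr(Σ₁ + Σ(t) − 2(Σ₁^{1/2} Σ(t) Σ₁^{1/2})^{1/2}) = t² · Tr(Σ₁ + Σ₂ − 2(Σ₁^{1/2} Σ₂ Σ₁^{1/2})^{1/2}). In particular, the Wasserstein distance satisfies W(Σ₁, Σ(t)) = t·W(Σ₁, Σ₂). -/

import Mathlib

/-!
Write `R = Σ₁^{1/2}`. For positive semidefinite `M`, `(R M R)² = R (M Σ₁ M) R` and `R M R ⪰ 0`, so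
uniqueness of positive square roots gives `(R (M Σ₁ M) R)^{1/2} = R M R`, whose trace is
`Tr(M Σ₁)`. Hence `Tr(Σ₁ + M Σ₁ M − 2 (R (M Σ₁ M) R)^{1/2}) = Tr((I − M) Σ₁ (I − M))`. Apply this
to `M = T`, for which `M Σ₁ M = Σ₂`, and to `M = (1 − t) I + t T`, for which `I − M = t (I − T)`.
-/

open Matrix

section
open scoped ComplexOrder

/-- The square root of a positive semidefinite matrix, with its definition from the older Mathlib
(removed from current Mathlib). -/
noncomputable def Matrix.PosSemidef.sqrt {n 𝕜 : Type*} [Fintype n] [RCLike 𝕜] [DecidableEq n]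
    {A : Matrix n n 𝕜} (hA : A.PosSemidef) : Matrix n n 𝕜 :=
  hA.1.eigenvectorUnitary.1 * diagonal ((↑) ∘ (√·) ∘ hA.1.eigenvalues) *
    (star hA.1.eigenvectorUnitary : Matrix n n 𝕜)

lemma Matrix.PosSemidef.posSemidef_sqrt {n 𝕜 : Type*} [Fintype n] [RCLike 𝕜] [DecidableEq n]
    {A : Matrix n n 𝕜} (hA : A.PosSemidef) : hA.sqrt.PosSemidef := by
  unfold Matrix.PosSemidef.sqrt
  refine PosSemidef.mul_mul_conjTranspose_same ?_ _
  refine posSemidef_diagonal_iff.mpr fun i => ?_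
  simp only [Function.comp_apply, RCLike.ofReal_nonneg]
  exact Real.sqrt_nonneg _

end

/-- The matrix `A^{1/2} B A^{1/2}` is positive semidefinite. -/
lemma sandwich_psd {n : ℕ} {A B : Matrix (Fin n) (Fin n) ℝ} (hA : A.PosDef) (hB : B.PosSemidef) :
    (hA.posSemidef.sqrt * B * hA.posSemidef.sqrt).PosSemidef := by
  have h := hB.conjTranspose_mul_mul_same hA.posSemidef.sqrt
  rwa [hA.posSemidef.posSemidef_sqrt.isHermitian.eq] at h

namespace CFC

variable {A : Type*} [PartialOrder A] [NonUnitalRing A] [TopologicalSpace A] [StarRing A]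
  [Module ℝ A] [SMulCommClass ℝ A A] [IsScalarTower ℝ A A] [StarOrderedRing A]
  [NonUnitalContinuousFunctionalCalculus ℝ A IsSelfAdjoint] [NonnegSpectrumClass ℝ A]
  [IsSemitopologicalRing A] [T2Space A]

lemma sqrt_sqrt_mul_conj_mul_sqrt {a b : A} (ha : 0 ≤ a) (hb : 0 ≤ b) :
    sqrt (sqrt a * (b * a * b) * sqrt a) = sqrt a * b * sqrt a := by
  refine sqrt_unique ?_ (conjugate_nonneg_of_nonneg hb (sqrt_nonneg a))
  calc sqrt a * b * sqrt a * (sqrt a * b * sqrt a)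
      = sqrt a * (b * (sqrt a * sqrt a) * b) * sqrt a := by simp only [mul_assoc]
    _ = sqrt a * (b * a * b) * sqrt a := by rw [sqrt_mul_sqrt_self a ha]

end CFC

lemma Matrix.trace_add_trace_conj_sub_two_trace {ι α : Type*} [Fintype ι] [DecidableEq ι]
    [CommRing α] (R M : Matrix ι ι α) :
    (R * R).trace + (M * (R * R) * M).trace - 2 * (R * M * R).trace
      = ((1 - M) * (R * R) * (1 - M)).trace := by
  have hcomm : (R * M * R).trace = (M * (R * R)).trace := by
    rw [trace_mul_cycle, trace_mul_comm]
  simp only [sub_mul, mul_sub, one_mul, mul_one, trace_sub]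
  rw [hcomm, trace_mul_comm (R * R) M]
  ring

section
open scoped ComplexOrder MatrixOrder

lemma Matrix.PosSemidef.sqrt_eq_cfcSqrt {ι 𝕜 : Type*} [Fintype ι] [RCLike 𝕜] [DecidableEq ι]
    {A : Matrix ι ι 𝕜} (hA : A.PosSemidef) : hA.sqrt = CFC.sqrt A := by
  rw [CFC.sqrt_eq_cfc, cfc_nnreal_eq_real _ A hA.nonneg, hA.1.cfc_eq, IsHermitian.cfc,
    Unitary.conjStarAlgAut_apply]
  simp [Matrix.PosSemidef.sqrt, Function.comp_def, hA.eigenvalues_nonneg]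

lemma Matrix.PosSemidef.trace_add_trace_conj_sub_two_trace_sqrt {ι 𝕜 : Type*} [Fintype ι]
    [RCLike 𝕜] [DecidableEq ι] {A M : Matrix ι ι 𝕜} (hA : A.PosSemidef) (hM : M.PosSemidef)
    (hS : (hA.sqrt * (M * A * M) * hA.sqrt).PosSemidef) :
    A.trace + (M * A * M).trace - 2 * hS.sqrt.trace = ((1 - M) * A * (1 - M)).trace := by
  have h := trace_add_trace_conj_sub_two_trace (CFC.sqrt A) M
  rw [CFC.sqrt_mul_sqrt_self A hA.nonneg] at h
  rwa [hS.sqrt_eq_cfcSqrt, hA.sqrt_eq_cfcSqrt,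
    CFC.sqrt_sqrt_mul_conj_mul_sqrt hA.nonneg hM.nonneg]

end

/-- along the curve `Σ(t) = ((1−t)I + tT) Σ₁ ((1−t)I + tT)` one has
`Tr(Σ₁ + Σ(t) − 2(Σ₁^{1/2} Σ(t) Σ₁^{1/2})^{1/2}) = t² Tr(Σ₁ + Σ₂ − 2(Σ₁^{1/2} Σ₂ Σ₁^{1/2})^{1/2})`,
and hence `W(Σ₁, Σ(t)) = t · W(Σ₁, Σ₂)`. -/
theorem wasserstein_geodesic_distance {n : ℕ} {S₁ S₂ T : Matrix (Fin n) (Fin n) ℝ}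
    (h1 : S₁.PosDef) (h2 : S₂.PosDef) (hT : T.PosDef) (hTeq : T * S₁ * T = S₂) :
    ∀ t : ℝ, t ∈ Set.Icc (0 : ℝ) 1 →
    ∀ hSt : ((((1 - t) • (1 : Matrix (Fin n) (Fin n) ℝ) + t • T) * S₁ *
              ((1 - t) • (1 : Matrix (Fin n) (Fin n) ℝ) + t • T))).PosSemidef,
      (S₁.trace + (((1 - t) • (1 : Matrix (Fin n) (Fin n) ℝ) + t • T) * S₁ *
          ((1 - t) • (1 : Matrix (Fin n) (Fin n) ℝ) + t • T)).trace
        - 2 * ((sandwich_psd h1 hSt).sqrt).trace)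
      = t ^ 2 * (S₁.trace + S₂.trace - 2 * ((sandwich_psd h1 h2.posSemidef).sqrt).trace) ∧
      Real.sqrt (S₁.trace + (((1 - t) • (1 : Matrix (Fin n) (Fin n) ℝ) + t • T) * S₁ *
          ((1 - t) • (1 : Matrix (Fin n) (Fin n) ℝ) + t • T)).trace
        - 2 * ((sandwich_psd h1 hSt).sqrt).trace)
      = t * Real.sqrt (S₁.trace + S₂.trace - 2 * ((sandwich_psd h1 h2.posSemidef).sqrt).trace) := by
  rintro t ⟨ht0, ht1⟩ hSt
  subst hTeq
  set M := (1 - t) • (1 : Matrix (Fin n) (Fin n) ℝ) + t • T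
  have hM : M.PosSemidef := (PosSemidef.one.smul (sub_nonneg.2 ht1)).add (hT.posSemidef.smul ht0)
  have hOneSubM : 1 - M = t • (1 - T) := by module
  have hdist : S₁.trace + (M * S₁ * M).trace - 2 * (sandwich_psd h1 hSt).sqrt.trace
      = t ^ 2 * ((1 - T) * S₁ * (1 - T)).trace := by
    rw [h1.posSemidef.trace_add_trace_conj_sub_two_trace_sqrt hM, hOneSubM]
    simp only [smul_mul_assoc, mul_smul_comm, smul_smul, trace_smul, smul_eq_mul, sq]
  rw [hdist, h1.posSemidef.trace_add_trace_conj_sub_two_trace_sqrt hT.posSemidef]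
  exact ⟨rfl, by rw [Real.sqrt_mul (sq_nonneg t), Real.sqrt_sq ht0]⟩
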